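/- arXiv:1306.0259 — 3 statements merged into one kernel-verified Lean document; each statement's English description precedes it below -/
import Mathlib

section
/- With g₀(x,y) = x + y and f₀(x,y) = xy on Δ = [0,1] × [0,1]: g₀ is convex on Δ, f₀ is g₀-convex dominated on the co-ordinates, but f₀ is not g₀-convex dominated on Δ. -/
def ConvexDominated (I : Set ℝ) (ψ φ : ℝ → ℝ) : Prop :=
  ∀ u ∈ I, ∀ v ∈ I, ∀ l : ℝ, l ∈ Set.Icc (0:ℝ) 1 →
    |l * φ u + (1 - l) * φ v - φ (l * u + (1 - l) * v)| ≤
      l * ψ u + (1 - l) * ψ v - ψ (l * u + (1 - l) * v)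

def ConvexDominated2 (a b c d : ℝ) (g f : ℝ → ℝ → ℝ) : Prop :=
  ∀ x ∈ Set.Icc a b, ∀ y ∈ Set.Icc c d, ∀ z ∈ Set.Icc a b, ∀ w ∈ Set.Icc c d,
    ∀ l : ℝ, l ∈ Set.Icc (0:ℝ) 1 →
      |l * f x y + (1 - l) * f z w - f (l * x + (1 - l) * z) (l * y + (1 - l) * w)| ≤
        l * g x y + (1 - l) * g z w - g (l * x + (1 - l) * z) (l * y + (1 - l) * w)

theorem stmt9 :
    ConvexOn ℝ (Set.Icc (0:ℝ) 1 ×ˢ Set.Icc (0:ℝ) 1) (fun q : ℝ × ℝ => q.1 + q.2) ∧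
    ((∀ x ∈ Set.Icc (0:ℝ) 1,
        ConvexDominated (Set.Icc (0:ℝ) 1) (fun u => x + u) (fun u => x * u)) ∧
     (∀ y ∈ Set.Icc (0:ℝ) 1,
        ConvexDominated (Set.Icc (0:ℝ) 1) (fun w => w + y) (fun w => w * y))) ∧
    ¬ ConvexDominated2 0 1 0 1 (fun x y => x + y) (fun x y => x * y) := by
  refine ⟨⟨(convex_Icc 0 1).prod (convex_Icc 0 1), ?_⟩, ⟨?_, ?_⟩, ?_⟩
  · intro p _ q _ a b _ _ _
    simp only [Prod.fst_add, Prod.snd_add, Prod.smul_fst, Prod.smul_snd, smul_eq_mul]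
    ring_nf
    exact le_refl _
  · intro x _ u _ v _ l _
    beta_reduce
    have h : l * (x * u) + (1 - l) * (x * v) - x * (l * u + (1 - l) * v) = 0 := by ring
    rw [h, abs_zero]
    nlinarith [sq_nonneg l]
  · intro y _ w _ v _ l _
    beta_reduce
    have h : l * (w * y) + (1 - l) * (v * y) - (l * w + (1 - l) * v) * y = 0 := by ring
    rw [h, abs_zero]
    nlinarith [sq_nonneg l]
  · intro h
    have := h 1 (by norm_num) 0 (by norm_num) 0 (by norm_num) 1 (by norm_num)
      (1/2) (by norm_num)
    norm_num at this
end

section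
/- Let g : [a,b] × [c,d] → ℝ be co-ordinated convex and f : [a,b] × [c,d] → ℝ be co-ordinated g-convex dominated, with a < b, c < d, both integrable. Then |(1/((b-a)(d-c))) ∫_a^b ∫_c^d f(x,y) dy dx - f((a+b)/2, (c+d)/2)| ≤ (1/((b-a)(d-c))) ∫_a^b ∫_c^d g(x,y) dy dx - g((a+b)/2, (c+d)/2). -/
open MeasureTheory

def CoordConvexDominated (a b c d : ℝ) (g f : ℝ → ℝ → ℝ) : Prop :=
  (∀ x ∈ Set.Icc a b, ConvexDominated (Set.Icc c d) (fun u => g x u) (fun u => f x u)) ∧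
  (∀ y ∈ Set.Icc c d, ConvexDominated (Set.Icc a b) (fun w => g w y) (fun w => f w y))

def CoordConvexOn (a b c d : ℝ) (f : ℝ → ℝ → ℝ) : Prop :=
  (∀ y ∈ Set.Icc c d, ConvexOn ℝ (Set.Icc a b) (fun x => f x y)) ∧
  (∀ x ∈ Set.Icc a b, ConvexOn ℝ (Set.Icc c d) (fun y => f x y))

/-- Midpoint convexity consequence used repeatedly. -/
lemma convexOn_mid {a b : ℝ} {φ : ℝ → ℝ} (h : ConvexOn ℝ (Set.Icc a b) φ)
    {x : ℝ} (hx : x ∈ Set.Icc a b) :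
    2 * φ ((a + b) / 2) ≤ φ x + φ (a + b - x) := by
  have hx' : a + b - x ∈ Set.Icc a b := by
    constructor
    · linarith [hx.2]
    · linarith [hx.1]
  have := h.2 hx hx' (by norm_num : (0:ℝ) ≤ 1/2) (by norm_num : (0:ℝ) ≤ 1/2)
    (by norm_num : (1:ℝ)/2 + 1/2 = 1)
  simp only [smul_eq_mul] at this
  have heq : (1/2 : ℝ) * x + (1/2) * (a + b - x) = (a + b) / 2 := by ring
  rw [heq] at this
  linarith

/-- A convex function on a compact interval is bounded. -/
lemma convexOn_abs_bound {a b : ℝ} {φ : ℝ → ℝ} (hab : a ≤ b)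
    (h : ConvexOn ℝ (Set.Icc a b) φ) :
    ∃ C : ℝ, ∀ x ∈ Set.Icc a b, |φ x| ≤ C := by
  set M := max (φ a) (φ b) with hM
  have ha : a ∈ Set.Icc a b := Set.left_mem_Icc.2 hab
  have hb : b ∈ Set.Icc a b := Set.right_mem_Icc.2 hab
  have hub : ∀ x ∈ Set.Icc a b, φ x ≤ M := by
    intro x hx
    have hseg : x ∈ segment ℝ a b := by rw [segment_eq_Icc hab]; exact hx
    exact h.le_on_segment ha hb hseg
  refine ⟨|M| + |2 * φ ((a + b) / 2) - M|, fun x hx => ?_⟩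
  have hx' : a + b - x ∈ Set.Icc a b := by
    constructor
    · linarith [hx.2]
    · linarith [hx.1]
  have h1 := convexOn_mid h hx
  have h2 := hub _ hx'
  have h3 := hub _ hx
  rw [abs_le]
  constructor
  · have : -(|2 * φ ((a + b) / 2) - M|) ≤ 2 * φ ((a + b) / 2) - M := neg_abs_le _
    have h4 : 0 ≤ |M| := abs_nonneg _
    linarith
  · have : M ≤ |M| := le_abs_self _
    have h4 : 0 ≤ |2 * φ ((a + b) / 2) - M| := abs_nonneg _
    linarith

lemma convexOn_intervalIntegrable {a b : ℝ} {φ : ℝ → ℝ} (hab : a ≤ b)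
    (h : ConvexOn ℝ (Set.Icc a b) φ) : IntervalIntegrable φ volume a b := by
  obtain ⟨C, hC⟩ := convexOn_abs_bound hab h
  rw [intervalIntegrable_iff_integrableOn_Ioc_of_le hab]
  constructor
  · have hcont : ContinuousOn φ (Set.Ioo a b) := by
      have := h.continuousOn_interior
      rwa [interior_Icc] at this
    have hrr : volume.restrict (Set.Ioo a b) = volume.restrict (Set.Ioc a b) :=
      Measure.restrict_congr_set Ioo_ae_eq_Ioc
    rw [show (volume.restrict (Set.Ioc a b)) = volume.restrict (Set.Ioo a b) from hrr.symm]
    exact hcont.aestronglyMeasurable measurableSet_Ioo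
  · refine HasFiniteIntegral.of_bounded (C := C) ?_
    filter_upwards [ae_restrict_mem measurableSet_Ioc] with x hx
    simpa [Real.norm_eq_abs] using hC x (Set.Ioc_subset_Icc_self hx)

/-- One-dimensional left Hermite–Hadamard inequality. -/
lemma hh_left {a b : ℝ} {φ : ℝ → ℝ} (hab : a ≤ b) (hconv : ConvexOn ℝ (Set.Icc a b) φ)
    (hint : IntervalIntegrable φ volume a b) :
    (b - a) * φ ((a + b) / 2) ≤ ∫ x in a..b, φ x := by
  have hrefl : IntervalIntegrable (fun x => φ (a + b - x)) volume a b := by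
    have h2 := (hint.comp_sub_left (a + b)).symm
    simpa using h2
  have hconst : IntervalIntegrable (fun _ : ℝ => 2 * φ ((a + b) / 2)) volume a b :=
    intervalIntegrable_const
  have hkey : ∀ x ∈ Set.Icc a b, 2 * φ ((a + b) / 2) ≤ φ x + φ (a + b - x) :=
    fun x hx => convexOn_mid hconv hx
  have hmono := intervalIntegral.integral_mono_on hab hconst (hint.add hrefl) hkey
  rw [intervalIntegral.integral_const] at hmono
  rw [intervalIntegral.integral_add hint hrefl] at hmono
  have hre : (∫ x in a..b, φ (a + b - x)) = ∫ x in a..b, φ x := by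
    rw [intervalIntegral.integral_comp_sub_left φ (a + b)]
    norm_num
  rw [hre] at hmono
  simp only [smul_eq_mul] at hmono
  linarith

lemma integrable_prod_restrict {a b c d : ℝ} {F : ℝ → ℝ → ℝ}
    (hint : IntegrableOn (fun q : ℝ × ℝ => F q.1 q.2) (Set.Icc a b ×ˢ Set.Icc c d)) :
    Integrable (fun q : ℝ × ℝ => F q.1 q.2)
      ((volume.restrict (Set.Ioc a b)).prod (volume.restrict (Set.Ioc c d))) := by
  have hint' : Integrable (fun q : ℝ × ℝ => F q.1 q.2)
      ((volume.prod volume).restrict (Set.Icc a b ×ˢ Set.Icc c d)) := by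
    rwa [← Measure.volume_eq_prod]
  rw [Measure.prod_restrict]
  have hle : ((volume : Measure ℝ).prod volume).restrict (Set.Ioc a b ×ˢ Set.Ioc c d) ≤
      ((volume : Measure ℝ).prod volume).restrict (Set.Icc a b ×ˢ Set.Icc c d) :=
    Measure.restrict_mono
      (Set.prod_mono Set.Ioc_subset_Icc_self Set.Ioc_subset_Icc_self) le_rfl
  exact hint'.mono_measure hle

lemma iterated_eq_prod {a b c d : ℝ} (hab : a ≤ b) (hcd : c ≤ d) {F : ℝ → ℝ → ℝ}
    (hint : IntegrableOn (fun q : ℝ × ℝ => F q.1 q.2) (Set.Icc a b ×ˢ Set.Icc c d)) :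
    (∫ x in a..b, ∫ y in c..d, F x y) =
      ∫ q : ℝ × ℝ, F q.1 q.2
        ∂((volume.restrict (Set.Ioc a b)).prod (volume.restrict (Set.Ioc c d))) := by
  rw [intervalIntegral.integral_of_le hab]
  simp_rw [intervalIntegral.integral_of_le hcd]
  exact MeasureTheory.integral_integral (integrable_prod_restrict hint)

/-- Two-dimensional left Hermite–Hadamard inequality for co-ordinated convex functions. -/
lemma hh_left2 {a b c d : ℝ} {h : ℝ → ℝ → ℝ} (hab : a < b) (hcd : c < d)
    (hcoord : CoordConvexOn a b c d h)
    (hint : IntegrableOn (fun q : ℝ × ℝ => h q.1 q.2) (Set.Icc a b ×ˢ Set.Icc c d)) :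
    (b - a) * ((d - c) * h ((a + b) / 2) ((c + d) / 2)) ≤
      ∫ x in a..b, ∫ y in c..d, h x y := by
  have hmy : (c + d) / 2 ∈ Set.Icc c d := by constructor <;> [linarith; linarith]
  have hφ : ConvexOn ℝ (Set.Icc a b) (fun x => h x ((c + d) / 2)) := hcoord.1 _ hmy
  have hφint := convexOn_intervalIntegrable hab.le hφ
  have hprod := integrable_prod_restrict hint
  have haey : ∀ᵐ x ∂(volume.restrict (Set.Ioc a b)),
      Integrable (fun y => h x y) (volume.restrict (Set.Ioc c d)) := hprod.prod_right_ae
  have hFint : Integrable (fun x => ∫ y, h x y ∂(volume.restrict (Set.Ioc c d)))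
      (volume.restrict (Set.Ioc a b)) := hprod.integral_prod_left
  -- a.e. inner inequality
  have hae : ∀ᵐ x ∂(volume.restrict (Set.Ioc a b)),
      (d - c) * h x ((c + d) / 2) ≤ ∫ y, h x y ∂(volume.restrict (Set.Ioc c d)) := by
    filter_upwards [haey, ae_restrict_mem measurableSet_Ioc] with x hx hxm
    have hxIcc : x ∈ Set.Icc a b := Set.Ioc_subset_Icc_self hxm
    have hconvy : ConvexOn ℝ (Set.Icc c d) (fun y => h x y) := hcoord.2 x hxIcc
    have hinty : IntervalIntegrable (fun y => h x y) volume c d := by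
      rw [intervalIntegrable_iff_integrableOn_Ioc_of_le hcd.le]
      exact hx
    have := hh_left hcd.le hconvy hinty
    rwa [intervalIntegral.integral_of_le hcd.le] at this
  -- outer
  have hFiv : IntervalIntegrable
      (fun x => ∫ y, h x y ∂(volume.restrict (Set.Ioc c d))) volume a b := by
    rw [intervalIntegrable_iff_integrableOn_Ioc_of_le hab.le]
    exact hFint
  have hciv : IntervalIntegrable (fun x => (d - c) * h x ((c + d) / 2)) volume a b :=
    hφint.const_mul _
  have hmono : (∫ x in a..b, (d - c) * h x ((c + d) / 2)) ≤
      ∫ x in a..b, ∫ y, h x y ∂(volume.restrict (Set.Ioc c d)) := by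
    refine intervalIntegral.integral_mono_ae_restrict hab.le hciv hFiv ?_
    rwa [show volume.restrict (Set.Icc a b) = volume.restrict (Set.Ioc a b) from
      (Measure.restrict_congr_set Ioc_ae_eq_Icc).symm]
  have h1 := hh_left hab.le hφ hφint
  have h2 : (∫ x in a..b, (d - c) * h x ((c + d) / 2)) =
      (d - c) * ∫ x in a..b, h x ((c + d) / 2) := by
    rw [intervalIntegral.integral_const_mul]
  have h3 : (∫ x in a..b, ∫ y in c..d, h x y) =
      ∫ x in a..b, ∫ y, h x y ∂(volume.restrict (Set.Ioc c d)) := by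
    congr 1
    ext x
    rw [intervalIntegral.integral_of_le hcd.le]
  rw [h3]
  have hdc : (0:ℝ) ≤ d - c := by linarith
  calc (b - a) * ((d - c) * h ((a + b) / 2) ((c + d) / 2))
      = (d - c) * ((b - a) * h ((a + b) / 2) ((c + d) / 2)) := by ring
    _ ≤ (d - c) * ∫ x in a..b, h x ((c + d) / 2) := by
        exact mul_le_mul_of_nonneg_left h1 hdc
    _ = ∫ x in a..b, (d - c) * h x ((c + d) / 2) := h2.symm
    _ ≤ _ := hmono

lemma convexOn_of_dominated {I : Set ℝ} (hI : Convex ℝ I) {ψ φ : ℝ → ℝ}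
    (hd : ConvexDominated I ψ φ) :
    ConvexOn ℝ I (fun u => ψ u - φ u) ∧ ConvexOn ℝ I (fun u => ψ u + φ u) := by
  constructor <;>
  · refine ⟨hI, ?_⟩
    intro u hu v hv p q hp hq hpq
    have hq' : q = 1 - p := by linarith
    have habs := abs_le.1 (hd u hu v hv p ⟨hp, by linarith⟩)
    simp only [smul_eq_mul]
    subst hq'
    nlinarith [habs.1, habs.2]

set_option maxHeartbeats 2000000 in
theorem stmt11 (a b c d : ℝ) (hab : a < b) (hcd : c < d) (g f : ℝ → ℝ → ℝ)
    (hg : CoordConvexOn a b c d g) (hdom : CoordConvexDominated a b c d g f)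
    (hfint : IntegrableOn (fun q : ℝ × ℝ => f q.1 q.2) (Set.Icc a b ×ˢ Set.Icc c d))
    (hgint : IntegrableOn (fun q : ℝ × ℝ => g q.1 q.2) (Set.Icc a b ×ˢ Set.Icc c d)) :
    |(1 / ((b - a) * (d - c))) * (∫ x in a..b, ∫ y in c..d, f x y) -
        f ((a + b) / 2) ((c + d) / 2)| ≤
      (1 / ((b - a) * (d - c))) * (∫ x in a..b, ∫ y in c..d, g x y) -
        g ((a + b) / 2) ((c + d) / 2) := by
  obtain ⟨hdx, hdy⟩ := hdom
  have hPcoord : CoordConvexOn a b c d (fun x y => g x y - f x y) := by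
    constructor
    · intro y hy
      exact (convexOn_of_dominated (convex_Icc a b) (hdy y hy)).1
    · intro x hx
      exact (convexOn_of_dominated (convex_Icc c d) (hdx x hx)).1
  have hQcoord : CoordConvexOn a b c d (fun x y => g x y + f x y) := by
    constructor
    · intro y hy
      exact (convexOn_of_dominated (convex_Icc a b) (hdy y hy)).2
    · intro x hx
      exact (convexOn_of_dominated (convex_Icc c d) (hdx x hx)).2
  have hPint : IntegrableOn (fun q : ℝ × ℝ => g q.1 q.2 - f q.1 q.2)
      (Set.Icc a b ×ˢ Set.Icc c d) := hgint.sub hfint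
  have hQint : IntegrableOn (fun q : ℝ × ℝ => g q.1 q.2 + f q.1 q.2)
      (Set.Icc a b ×ˢ Set.Icc c d) := hgint.add hfint
  have hP := hh_left2 (h := fun x y => g x y - f x y) hab hcd hPcoord hPint
  have hQ := hh_left2 (h := fun x y => g x y + f x y) hab hcd hQcoord hQint
  have hfpr := integrable_prod_restrict (F := f) (a := a) (b := b) (c := c) (d := d) hfint
  have hgpr := integrable_prod_restrict (F := g) (a := a) (b := b) (c := c) (d := d) hgint
  have hEf := iterated_eq_prod (F := f) hab.le hcd.le hfint
  have hEg := iterated_eq_prod (F := g) hab.le hcd.le hgint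
  set A := ∫ x in a..b, ∫ y in c..d, f x y with hA
  set B := ∫ x in a..b, ∫ y in c..d, g x y with hB
  have hsub : (∫ x in a..b, ∫ y in c..d, (g x y - f x y)) = B - A := by
    rw [iterated_eq_prod (F := fun x y => g x y - f x y) hab.le hcd.le hPint,
      integral_sub hgpr hfpr, ← hEf, ← hEg]
  have hadd : (∫ x in a..b, ∫ y in c..d, (g x y + f x y)) = B + A := by
    rw [iterated_eq_prod (F := fun x y => g x y + f x y) hab.le hcd.le hQint,
      integral_add hgpr hfpr, ← hEf, ← hEg]
  rw [hsub] at hP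
  rw [hadd] at hQ
  set mx := (a + b) / 2
  set my := (c + d) / 2
  set k := (b - a) * (d - c) with hkdef
  have hk : 0 < k := mul_pos (by linarith) (by linarith)
  have hdivP : g mx my - f mx my ≤ (B - A) / k := by
    rw [le_div_iff₀ hk]
    linear_combination hP
  have hdivQ : g mx my + f mx my ≤ (B + A) / k := by
    rw [le_div_iff₀ hk]
    linear_combination hQ
  have e1 : (B - A) / k = 1 / k * B - 1 / k * A := by ring
  have e2 : (B + A) / k = 1 / k * B + 1 / k * A := by ring
  rw [abs_le]
  constructor
  · rw [e2] at hdivQ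
    linarith
  · rw [e1] at hdivP
    linarith
end

section
/- Let g : [a,b] × [c,d] → ℝ be co-ordinated convex and f : [a,b] × [c,d] → ℝ be co-ordinated g-convex dominated, with a < b, c < d, both integrable. Then |(f(a,c)+f(a,d)+f(b,c)+f(b,d))/4 - (1/((b-a)(d-c))) ∫_a^b ∫_c^d f(x,y) dy dx| ≤ (g(a,c)+g(a,d)+g(b,c)+g(b,d))/4 - (1/((b-a)(d-c))) ∫_a^b ∫_c^d g(x,y) dy dx. -/
/-!
Domination of `f` by `g` says exactly that `g + f` and `g - f` are co-ordinated convex, so it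
suffices to prove the right-hand Hermite–Hadamard inequality
`∬ h ≤ (b - a) (d - c) (h a c + h a d + h b c + h b d) / 4` for co-ordinated convex `h`.
Convexity in `y`, and then in `x` on the edges `y = c` and `y = d`, bounds `h` by the bilinear
interpolant of its corner values, whose integral is exactly the right-hand side.
-/

open MeasureTheory

open Set

noncomputable def chord (φ : ℝ → ℝ) (a b x : ℝ) : ℝ :=
  ((b - x) * φ a + (x - a) * φ b) / (b - a)

theorem ConvexOn.le_chord {a b x : ℝ} {φ : ℝ → ℝ} (h : ConvexOn ℝ (Icc a b) φ) (hab : a < b)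
    (hx : x ∈ Icc a b) : φ x ≤ chord φ a b x := by
  have hba : 0 < b - a := sub_pos.2 hab
  have hcomb : ((b - x) / (b - a)) • a + ((x - a) / (b - a)) • b = x := by
    simp only [smul_eq_mul]; field_simp; ring
  have key := h.2 (left_mem_Icc.2 hab.le) (right_mem_Icc.2 hab.le)
    (div_nonneg (sub_nonneg.2 hx.2) hba.le) (div_nonneg (sub_nonneg.2 hx.1) hba.le)
    (by field_simp; ring)
  rw [hcomb] at key
  simpa only [chord, smul_eq_mul, add_div, mul_div_right_comm] using key

theorem chord_mono {φ ψ : ℝ → ℝ} {a b x : ℝ} (hx : x ∈ Icc a b) (ha : φ a ≤ ψ a)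
    (hb : φ b ≤ ψ b) : chord φ a b x ≤ chord ψ a b x := by
  unfold chord
  gcongr ?_ / _
  · linarith [hx.1, hx.2]
  · gcongr <;> linarith [hx.1, hx.2]

theorem integral_chord (φ : ℝ → ℝ) {a b : ℝ} (hab : a ≠ b) :
    ∫ x in a..b, chord φ a b x = (b - a) * (φ a + φ b) / 2 := by
  have hint : ∀ p : ℝ → ℝ, Continuous p → IntervalIntegrable p volume a b :=
    fun p hp => hp.intervalIntegrable a b
  simp only [chord]
  rw [intervalIntegral.integral_div,
    intervalIntegral.integral_add (hint _ (by fun_prop)) (hint _ (by fun_prop)),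
    intervalIntegral.integral_mul_const, intervalIntegral.integral_mul_const,
    intervalIntegral.integral_sub (hint _ (by fun_prop)) (hint _ (by fun_prop)),
    intervalIntegral.integral_sub (hint _ (by fun_prop)) (hint _ (by fun_prop))]
  simp only [intervalIntegral.integral_const, integral_id, smul_eq_mul]
  have hab' : b - a ≠ 0 := sub_ne_zero.2 hab.symm
  field_simp
  ring

theorem integral_integral_chord_chord (h : ℝ → ℝ → ℝ) {a b c d : ℝ} (hab : a ≠ b) (hcd : c ≠ d) :
    ∫ x in a..b, ∫ y in c..d, chord (fun y' => chord (fun x' => h x' y') a b x) c d y =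
      (b - a) * (d - c) * (h a c + h a d + h b c + h b d) / 4 := by
  have hchord_add : ∀ x,
      (d - c) * (chord (fun x' => h x' c) a b x + chord (fun x' => h x' d) a b x) / 2 =
        (d - c) / 2 * chord (fun x' => h x' c + h x' d) a b x := by
    intro x; simp only [chord]; ring
  simp only [integral_chord _ hcd, hchord_add, intervalIntegral.integral_const_mul,
    integral_chord _ hab]
  ring

theorem setIntegral_Icc_prod_Icc {E : Type*} [NormedAddCommGroup E] [NormedSpace ℝ E]
    {a b c d : ℝ} (hab : a ≤ b) (hcd : c ≤ d) {f : ℝ × ℝ → E}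
    (hf : IntegrableOn f (Icc a b ×ˢ Icc c d)) :
    ∫ q in Icc a b ×ˢ Icc c d, f q = ∫ x in a..b, ∫ y in c..d, f (x, y) := by
  rw [Measure.volume_eq_prod] at hf ⊢
  simp only [setIntegral_prod f hf, intervalIntegral.integral_of_le hab,
    intervalIntegral.integral_of_le hcd, integral_Icc_eq_integral_Ioc]

theorem ConvexDominated.convexOn_add {I : Set ℝ} {ψ φ : ℝ → ℝ} (hI : Convex ℝ I)
    (h : ConvexDominated I ψ φ) : ConvexOn ℝ I (ψ + φ) := by
  refine ⟨hI, fun u hu v hv l m hl hm hlm => ?_⟩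
  obtain rfl : m = 1 - l := by linarith
  have := abs_le.1 (h u hu v hv l ⟨hl, by linarith⟩)
  simp only [Pi.add_apply, smul_eq_mul]
  linarith [this.1]

theorem ConvexDominated.convexOn_sub {I : Set ℝ} {ψ φ : ℝ → ℝ} (hI : Convex ℝ I)
    (h : ConvexDominated I ψ φ) : ConvexOn ℝ I (ψ - φ) := by
  refine ⟨hI, fun u hu v hv l m hl hm hlm => ?_⟩
  obtain rfl : m = 1 - l := by linarith
  have := abs_le.1 (h u hu v hv l ⟨hl, by linarith⟩)
  simp only [Pi.sub_apply, smul_eq_mul]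
  linarith [this.2]

namespace CoordConvexDominated

variable {a b c d : ℝ} {g f : ℝ → ℝ → ℝ}

theorem coordConvexOn_add (h : CoordConvexDominated a b c d g f) :
    CoordConvexOn a b c d (fun x y => g x y + f x y) :=
  ⟨fun y hy => (h.2 y hy).convexOn_add (convex_Icc a b),
    fun x hx => (h.1 x hx).convexOn_add (convex_Icc c d)⟩

theorem coordConvexOn_sub (h : CoordConvexDominated a b c d g f) :
    CoordConvexOn a b c d (fun x y => g x y - f x y) :=
  ⟨fun y hy => (h.2 y hy).convexOn_sub (convex_Icc a b),
    fun x hx => (h.1 x hx).convexOn_sub (convex_Icc c d)⟩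

end CoordConvexDominated

namespace CoordConvexOn

variable {a b c d : ℝ} {h : ℝ → ℝ → ℝ}

theorem le_chord_chord (hconv : CoordConvexOn a b c d h) (hab : a < b) (hcd : c < d)
    {x y : ℝ} (hx : x ∈ Icc a b) (hy : y ∈ Icc c d) :
    h x y ≤ chord (fun y' => chord (fun x' => h x' y') a b x) c d y :=
  calc h x y ≤ chord (h x) c d y := (hconv.2 x hx).le_chord hcd hy
    _ ≤ _ := chord_mono hy ((hconv.1 c (left_mem_Icc.2 hcd.le)).le_chord hab hx)
      ((hconv.1 d (right_mem_Icc.2 hcd.le)).le_chord hab hx)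

theorem setIntegral_le (hconv : CoordConvexOn a b c d h) (hab : a < b) (hcd : c < d)
    (hint : IntegrableOn (fun q : ℝ × ℝ => h q.1 q.2) (Icc a b ×ˢ Icc c d)) :
    ∫ q in Icc a b ×ˢ Icc c d, h q.1 q.2 ≤
      (b - a) * (d - c) * (h a c + h a d + h b c + h b d) / 4 := by
  set B : ℝ × ℝ → ℝ := fun q => chord (fun y' => chord (fun x' => h x' y') a b q.1) c d q.2
  have hB : IntegrableOn B (Icc a b ×ˢ Icc c d) :=
    (by simp only [B, chord]; fun_prop : Continuous B).continuousOn.integrableOn_compact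
      (isCompact_Icc.prod isCompact_Icc)
  calc ∫ q in Icc a b ×ˢ Icc c d, h q.1 q.2
      ≤ ∫ q in Icc a b ×ˢ Icc c d, B q :=
        setIntegral_mono_on hint hB (measurableSet_Icc.prod measurableSet_Icc)
          fun q hq => hconv.le_chord_chord hab hcd hq.1 hq.2
    _ = _ := by
      rw [setIntegral_Icc_prod_Icc hab.le hcd.le hB]
      exact integral_integral_chord_chord h hab.ne hcd.ne

end CoordConvexOn

theorem stmt12_general (a b c d : ℝ) (hab : a < b) (hcd : c < d) (g f : ℝ → ℝ → ℝ)
    (hdom : CoordConvexDominated a b c d g f)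
    (hfint : IntegrableOn (fun q : ℝ × ℝ => f q.1 q.2) (Set.Icc a b ×ˢ Set.Icc c d))
    (hgint : IntegrableOn (fun q : ℝ × ℝ => g q.1 q.2) (Set.Icc a b ×ˢ Set.Icc c d)) :
    |(f a c + f a d + f b c + f b d) / 4 -
        (1 / ((b - a) * (d - c))) * (∫ x in a..b, ∫ y in c..d, f x y)| ≤
      (g a c + g a d + g b c + g b d) / 4 -
        (1 / ((b - a) * (d - c))) * (∫ x in a..b, ∫ y in c..d, g x y) := by
  have hadd := hdom.coordConvexOn_add.setIntegral_le hab hcd (hgint.add hfint)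
  have hsub := hdom.coordConvexOn_sub.setIntegral_le hab hcd (hgint.sub hfint)
  rw [integral_add hgint hfint] at hadd
  rw [integral_sub hgint hfint] at hsub
  rw [← setIntegral_Icc_prod_Icc hab.le hcd.le hfint,
    ← setIntegral_Icc_prod_Icc hab.le hcd.le hgint, abs_le]
  have harea : 0 < (b - a) * (d - c) := mul_pos (sub_pos.2 hab) (sub_pos.2 hcd)
  have hnorm : ∀ I S : ℝ, I ≤ (b - a) * (d - c) * S / 4 → 1 / ((b - a) * (d - c)) * I ≤ S / 4 :=
    fun I S h => by rw [one_div_mul_eq_div, div_le_iff₀ harea]; linarith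
  have h1 := hnorm _ _ hadd
  have h2 := hnorm _ _ hsub
  rw [mul_add] at h1
  rw [mul_sub] at h2
  constructor <;> linarith

theorem stmt12 (a b c d : ℝ) (hab : a < b) (hcd : c < d) (g f : ℝ → ℝ → ℝ)
    (hg : CoordConvexOn a b c d g) (hdom : CoordConvexDominated a b c d g f)
    (hfint : IntegrableOn (fun q : ℝ × ℝ => f q.1 q.2) (Set.Icc a b ×ˢ Set.Icc c d))
    (hgint : IntegrableOn (fun q : ℝ × ℝ => g q.1 q.2) (Set.Icc a b ×ˢ Set.Icc c d)) :
    |(f a c + f a d + f b c + f b d) / 4 -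
        (1 / ((b - a) * (d - c))) * (∫ x in a..b, ∫ y in c..d, f x y)| ≤
      (g a c + g a d + g b c + g b d) / 4 -
        (1 / ((b - a) * (d - c))) * (∫ x in a..b, ∫ y in c..d, g x y) :=
  stmt12_general a b c d hab hcd g f hdom hfint hgint
end
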